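/- Let 1 < r < 3 and let f : ℝⁿ → ℝ be convex and continuously differentiable, attaining its minimum f⋆ at x⋆. Suppose that the function x ↦ (f(x) − f⋆)^{(r−1)/2} is convex, and let X be a solution to the generalized ODE Ẍ + (r/t)Ẋ + ∇f(X) = 0 with X(0) = x₀, Ẋ(0) = 0. Then for every t > 0, f(X(t)) − f⋆ ≤ (r−1)²‖x₀ − x⋆‖²/(2t²). -/

import Mathlib

open Set Filter Topology Real

noncomputable section

abbrev E (n : ℕ) := EuclideanSpace ℝ (Fin n)

/-- A solution of the generalized ODE `Ẍ + (r/t)Ẋ + ∇f(X) = 0`, `X(0) = x₀`, `Ẋ(0) = 0`,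
C² on `(0,∞)`, C¹ on `[0,∞)`. -/
def GenNesterovSol (n : ℕ) (r : ℝ) (f : E n → ℝ) (x0 : E n) (X : ℝ → E n) : Prop :=
  X 0 = x0 ∧
  ContDiffOn ℝ 1 X (Set.Ici 0) ∧
  ContDiffOn ℝ 2 X (Set.Ioi 0) ∧
  derivWithin X (Set.Ici 0) 0 = 0 ∧
  ∀ t > (0:ℝ), deriv (deriv X) t + (r / t) • deriv X t + gradient f (X t) = 0

/-! With `c = r - 1`, the energy `𝓔(t) = (t/c)²(f(X) - f⋆) + ½‖X + (t/c)Ẋ - x⋆‖²` has, along the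
ODE, derivative `(t/c)((2/c)(f(X) - f⋆) - ⟪∇f(X), X - x⋆⟫)`. Restricted to the segment from `x` to
`x⋆`, the convex function `(f - f⋆)^(c/2)` vanishes at `x⋆`, so its tangent at `x` gives
`f(x) - f⋆ ≤ (c/2)⟪∇f(x), x - x⋆⟫`. Hence `𝓔` is nonincreasing, and
`(t/c)²(f(X(t)) - f⋆) ≤ 𝓔(t) ≤ 𝓔(0) = ½‖x₀ - x⋆‖²`. -/

open InnerProductSpace

lemma sub_le_mul_fderiv_of_convexOn_rpow {G : Type*} [NormedAddCommGroup G] [NormedSpace ℝ G]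
    {f : G → ℝ} {xstar x : G} {p : ℝ} (hp : 0 < p) (hmin : IsMinOn f univ xstar)
    (hpow : ConvexOn ℝ univ (fun y => (f y - f xstar) ^ p)) (hf : DifferentiableAt ℝ f x) :
    f x - f xstar ≤ p * fderiv ℝ f x (x - xstar) := by
  have hmin' : ∀ y, f xstar ≤ f y := fun y => hmin (mem_univ y)
  rcases (sub_nonneg.2 (hmin' x)).eq_or_lt with hA | hA
  · have hxmin : IsMinOn f univ x := fun y _ => by
      show f x ≤ f y
      linarith [hmin' y]
    rw [← hA, (hxmin.isLocalMin univ_mem).fderiv_eq_zero]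
    simp
  · set A := f x - f xstar
    set D := fderiv ℝ f x (xstar - x)
    let L : ℝ →ᵃ[ℝ] G := AffineMap.lineMap x xstar
    have hg : ConvexOn ℝ univ (fun s => (f (L s) - f xstar) ^ p) := by
      simpa [Function.comp_def] using hpow.comp_affineMap L
    have hfL : HasDerivAt (fun s => f (L s) - f xstar) D 0 := by
      have := hf.hasFDerivAt.comp_hasDerivAt_of_eq (x := (0 : ℝ))
        (AffineMap.hasDerivAt_lineMap (a := x) (b := xstar)) (by simp)
      simpa only [Function.comp_def] using this.sub_const (f xstar)
    have hg' := hfL.rpow_const (p := p) (Or.inl (by simpa [L] using hA.ne'))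
    have hslope := hg.le_slope_of_hasDerivAt (mem_univ 0) (mem_univ 1) one_pos hg'
    simp only [slope_def_field, L, AffineMap.lineMap_apply_zero, AffineMap.lineMap_apply_one,
      sub_self, zero_rpow hp.ne', zero_sub, sub_zero, div_one] at hslope
    have hsplit : A ^ p = A ^ (p - 1) * A := by
      rw [← rpow_add_one hA.ne']
      ring_nf
    have hpos : 0 < A ^ (p - 1) := rpow_pos_of_pos hA _
    have hDA : D * p ≤ -A := by nlinarith
    have hD : fderiv ℝ f x (x - xstar) = -D := by rw [← map_neg, neg_sub]
    rw [hD]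
    linarith

section Energy

variable {F : Type*} [NormedAddCommGroup F] [InnerProductSpace ℝ F]

lemma sub_le_mul_inner_gradient_of_convexOn_rpow [CompleteSpace F] {f : F → ℝ} {xstar x : F}
    {p : ℝ} (hp : 0 < p) (hmin : IsMinOn f univ xstar)
    (hpow : ConvexOn ℝ univ (fun y => (f y - f xstar) ^ p)) (hf : DifferentiableAt ℝ f x) :
    f x - f xstar ≤ p * ⟪gradient f x, x - xstar⟫_ℝ := by
  simpa only [gradient, InnerProductSpace.toDual_symm_apply] using
    sub_le_mul_fderiv_of_convexOn_rpow hp hmin hpow hf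

def lowFrictionEnergy (c : ℝ) (f : F → ℝ) (xstar : F) (X V : ℝ → F) (t : ℝ) : ℝ :=
  (t / c) ^ 2 * (f (X t) - f xstar) + 1 / 2 * ‖X t + (t / c) • V t - xstar‖ ^ 2

lemma continuousOn_lowFrictionEnergy {c : ℝ} {f : F → ℝ} {xstar : F} {X V : ℝ → F} {s : Set ℝ}
    (hf : Continuous f) (hX : ContinuousOn X s) (hV : ContinuousOn V s) :
    ContinuousOn (lowFrictionEnergy c f xstar X V) s := by
  unfold lowFrictionEnergy
  fun_prop

lemma hasDerivAt_add_div_smul_of_ode {X V : ℝ → F} {r s : ℝ} {a g : F}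
    (hX : HasDerivAt X (V s) s) (hV : HasDerivAt V a s) (hode : a + (r / s) • V s + g = 0)
    (hs : s ≠ 0) (hr : r - 1 ≠ 0) :
    HasDerivAt (fun u => X u + (u / (r - 1)) • V u) (-(s / (r - 1)) • g) s := by
  convert hX.fun_add (((hasDerivAt_id' s).div_const (r - 1)).fun_smul hV) using 1
  rw [eq_sub_of_add_eq (eq_neg_of_add_eq_zero_left hode)]
  match_scalars
  · field_simp
  · field_simp
    ring

lemma hasDerivAt_lowFrictionEnergy [CompleteSpace F] {f : F → ℝ} {xstar : F} {X V : ℝ → F}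
    {r s : ℝ} {a : F}
    (hf : DifferentiableAt ℝ f (X s)) (hX : HasDerivAt X (V s) s) (hV : HasDerivAt V a s)
    (hode : a + (r / s) • V s + gradient f (X s) = 0) (hs : s ≠ 0) (hr : r - 1 ≠ 0) :
    HasDerivAt (lowFrictionEnergy (r - 1) f xstar X V)
      (s / (r - 1) * (2 / (r - 1) * (f (X s) - f xstar) - ⟪gradient f (X s), X s - xstar⟫_ℝ))
      s := by
  have hfX : HasDerivAt (fun u => f (X u)) ⟪gradient f (X s), V s⟫_ℝ s := by
    simpa only [Function.comp_def, gradient, InnerProductSpace.toDual_symm_apply] using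
      hf.hasFDerivAt.comp_hasDerivAt s hX
  have hY := (hasDerivAt_add_div_smul_of_ode hX hV hode hs hr).sub_const xstar
  refine ((((hasDerivAt_id' s).div_const (r - 1)).fun_pow 2).fun_mul
    (hfX.sub_const (f xstar))).fun_add (hY.norm_sq.const_mul (1 / 2)) |>.congr_deriv ?_
  simp only [inner_sub_left, inner_sub_right, inner_add_left, real_inner_smul_right,
    real_inner_comm (gradient f (X s)), Nat.cast_ofNat, Nat.reduceSub, pow_one]
  field_simp
  ring

end Energy

namespace GenNesterovSol

variable {n : ℕ} {r : ℝ} {f : E n → ℝ} {x0 : E n} {X : ℝ → E n}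

lemma hasDerivAt (hX : GenNesterovSol n r f x0 X) {s : ℝ} (hs : 0 < s) :
    HasDerivAt X (derivWithin X (Ici 0) s) s := by
  rw [derivWithin_of_mem_nhds (Ici_mem_nhds hs)]
  exact ((hX.2.2.1.differentiableOn two_ne_zero).differentiableAt (Ioi_mem_nhds hs)).hasDerivAt

lemma hasDerivAt_derivWithin (hX : GenNesterovSol n r f x0 X) {s : ℝ} (hs : 0 < s) :
    HasDerivAt (derivWithin X (Ici 0)) (deriv (deriv X) s) s := by
  have hX' : ContDiffOn ℝ 1 (deriv X) (Ioi 0) := hX.2.2.1.deriv_of_isOpen isOpen_Ioi (by norm_num)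
  refine ((hX'.differentiableOn one_ne_zero).differentiableAt
    (Ioi_mem_nhds hs)).hasDerivAt.congr_of_eventuallyEq ?_
  filter_upwards [Ioi_mem_nhds hs] with u hu using derivWithin_of_mem_nhds (Ici_mem_nhds hu)

lemma hasDerivAt_lowFrictionEnergy (hX : GenNesterovSol n r f x0 X) (hf : Differentiable ℝ f)
    (hr : r ≠ 1) (xstar : E n) {s : ℝ} (hs : 0 < s) :
    HasDerivAt (lowFrictionEnergy (r - 1) f xstar X (derivWithin X (Ici 0)))
      (s / (r - 1) * (2 / (r - 1) * (f (X s) - f xstar) - ⟪gradient f (X s), X s - xstar⟫_ℝ))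
      s := by
  refine _root_.hasDerivAt_lowFrictionEnergy (hf _) (hX.hasDerivAt hs)
    (hX.hasDerivAt_derivWithin hs) ?_ hs.ne' (sub_ne_zero.2 hr)
  rw [derivWithin_of_mem_nhds (Ici_mem_nhds hs)]
  exact hX.2.2.2.2 s hs

theorem antitoneOn_lowFrictionEnergy (hX : GenNesterovSol n r f x0 X) (hr : 1 < r)
    (hf : ContDiff ℝ 1 f) {xstar : E n} (hmin : IsMinOn f univ xstar)
    (hpow : ConvexOn ℝ univ (fun x => (f x - f xstar) ^ ((r - 1) / 2))) :
    AntitoneOn (lowFrictionEnergy (r - 1) f xstar X (derivWithin X (Ici 0))) (Ici 0) := by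
  have hf' : Differentiable ℝ f := hf.differentiable one_ne_zero
  have hderiv := fun s (hs : 0 < s) => hX.hasDerivAt_lowFrictionEnergy hf' hr.ne' xstar hs
  refine antitoneOn_of_deriv_nonpos (convex_Ici 0) (continuousOn_lowFrictionEnergy hf.continuous
    hX.2.1.continuousOn (hX.2.1.continuousOn_derivWithin (uniqueDiffOn_Ici 0) le_rfl)) ?_ ?_ <;>
    rw [interior_Ici]
  · exact fun s hs => (hderiv s hs).differentiableAt.differentiableWithinAt
  · intro s hs
    have key := sub_le_mul_inner_gradient_of_convexOn_rpow (p := (r - 1) / 2) (by linarith)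
      hmin hpow (hf' (X s))
    rw [(hderiv s hs).deriv]
    refine mul_nonpos_of_nonneg_of_nonpos (div_nonneg (le_of_lt hs) (by linarith)) ?_
    rw [sub_nonpos, div_mul_eq_mul_div, div_le_iff₀ (by linarith)]
    linarith

end GenNesterovSol

theorem gen_ode_low_friction_general (n : ℕ) (r : ℝ) (hr1 : 1 < r)
    (f : E n → ℝ) (hsmooth : ContDiff ℝ 1 f)
    (xstar : E n) (hmin : IsMinOn f Set.univ xstar)
    (hpow : ConvexOn ℝ Set.univ (fun x => (f x - f xstar) ^ ((r - 1) / 2)))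
    (x0 : E n) (X : ℝ → E n) (hX : GenNesterovSol n r f x0 X) :
    ∀ t > (0:ℝ), f (X t) - f xstar ≤ (r - 1) ^ 2 * ‖x0 - xstar‖ ^ 2 / (2 * t ^ 2) := by
  intro t ht
  have hanti := hX.antitoneOn_lowFrictionEnergy hr1 hsmooth hmin hpow
  have hbound : (t / (r - 1)) ^ 2 * (f (X t) - f xstar) ≤ 1 / 2 * ‖x0 - xstar‖ ^ 2 :=
    calc _ ≤ lowFrictionEnergy (r - 1) f xstar X (derivWithin X (Ici 0)) t :=
          le_add_of_nonneg_right (by positivity)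
      _ ≤ lowFrictionEnergy (r - 1) f xstar X (derivWithin X (Ici 0)) 0 :=
          hanti self_mem_Ici ht.le ht.le
      _ = 1 / 2 * ‖x0 - xstar‖ ^ 2 := by simp [lowFrictionEnergy, hX.1]
  rw [div_pow, div_mul_eq_mul_div, div_le_iff₀ (pow_pos (sub_pos.2 hr1) 2)] at hbound
  rw [le_div_iff₀ (by positivity)]
  linarith

/-- **Theorem 7 (low friction with extra structure).** For `1 < r < 3` and convex
continuously differentiable `f` whose centered `(r-1)/2` power is convex, the solution of the
generalized ODE satisfies `f(X(t)) - f⋆ ≤ (r-1)²‖x₀-x⋆‖²/(2t²)`. -/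
theorem gen_ode_low_friction (n : ℕ) (r : ℝ) (hr1 : 1 < r) (hr3 : r < 3)
    (f : E n → ℝ) (hconv : ConvexOn ℝ Set.univ f) (hsmooth : ContDiff ℝ 1 f)
    (xstar : E n) (hmin : IsMinOn f Set.univ xstar)
    (hpow : ConvexOn ℝ Set.univ (fun x => (f x - f xstar) ^ ((r - 1) / 2)))
    (x0 : E n) (X : ℝ → E n) (hX : GenNesterovSol n r f x0 X) :
    ∀ t > (0:ℝ), f (X t) - f xstar ≤ (r - 1) ^ 2 * ‖x0 - xstar‖ ^ 2 / (2 * t ^ 2) :=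
  gen_ode_low_friction_general n r hr1 f hsmooth xstar hmin hpow x0 X hX
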